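/- (Two-step candidate cost bound, Prop. 3 core inequality.) Under the assumptions that (i) the stage cost satisfies α₁‖x − x^r‖² ≤ ℓ(x, u, r) when u = u^r and ℓ(x,u,r) ≤ α₂‖x − x^r‖² + ‖u − u^r‖²_R, (ii) the dynamics are L_f-Lipschitz in the state, and (iii) the turnpike-type bound ℓ_{N−1} ≤ γ̄((γ̄−1)/γ̄)^N ℓ_0 holds relating the stage cost at the end of the horizon to the one at the beginning, the additional terminal candidate cost satisfies ℓ(x̂_{N}, u^r_{N}, r_{N}) ≤ (α₂/α₁) L_f² γ̄ ((γ̄−1)/γ̄)^N ℓ(x_0, u_0, r_0), where x̂_N = f(x_{N−1}, u^r_{N−1}). -/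
import Mathlib


/-- Two-step candidate cost bound (core inequality of Prop. 3): the additional
terminal candidate cost is bounded by `(α₂/α₁) L_f² γ̄ ((γ̄−1)/γ̄)^N` times the
initial stage cost, given the turnpike-type terminal decay bound. -/
theorem stmt_13 {n : ℕ} {Um : Type*}
    (f : EuclideanSpace ℝ (Fin n) → Um → EuclideanSpace ℝ (Fin n))
    (Lf : ℝ) (hLf : 0 ≤ Lf)
    (hfLip : ∀ (x y : EuclideanSpace ℝ (Fin n)) (u : Um),
      ‖f x u - f y u‖ ≤ Lf * ‖x - y‖)
    (ℓ : EuclideanSpace ℝ (Fin n) → Um → (EuclideanSpace ℝ (Fin n) × Um) → ℝ)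
    (α₁ α₂ : ℝ) (hα₁ : 0 < α₁) (hα₂ : 0 < α₂)
    (hnonneg : ∀ x u r, 0 ≤ ℓ x u r)
    (hlow : ∀ (x xr : EuclideanSpace ℝ (Fin n)) (ur : Um),
      α₁ * ‖x - xr‖ ^ 2 ≤ ℓ x ur (xr, ur))
    (hup : ∀ (x xr : EuclideanSpace ℝ (Fin n)) (u : Um),
      ℓ x u (xr, u) ≤ α₂ * ‖x - xr‖ ^ 2)
    (γ : ℝ) (hγ : 1 < γ) (N : ℕ)
    -- data along the optimal trajectory and the reachable reference
    (x₀ xr₀ xN1 xrN1 : EuclideanSpace ℝ (Fin n)) (u₀ ur₀ urN1 : Um)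
    -- turnpike-type bound on the terminal stage cost
    (hturn : ℓ xN1 urN1 (xrN1, urN1) ≤ γ * ((γ - 1) / γ) ^ N * ℓ x₀ u₀ (xr₀, ur₀)) :
    ∀ u' : Um,
      ℓ (f xN1 urN1) u' (f xrN1 urN1, u') ≤
        α₂ / α₁ * Lf ^ 2 * γ * ((γ - 1) / γ) ^ N * ℓ x₀ u₀ (xr₀, ur₀) := by
  intro u'
  have h1 : ℓ (f xN1 urN1) u' (f xrN1 urN1, u') ≤ α₂ * ‖f xN1 urN1 - f xrN1 urN1‖ ^ 2 :=
    hup _ _ _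
  have h2 : ‖f xN1 urN1 - f xrN1 urN1‖ ^ 2 ≤ Lf ^ 2 * ‖xN1 - xrN1‖ ^ 2 := by
    have := hfLip xN1 xrN1 urN1
    calc ‖f xN1 urN1 - f xrN1 urN1‖ ^ 2 ≤ (Lf * ‖xN1 - xrN1‖) ^ 2 := by
          apply pow_le_pow_left₀ (norm_nonneg _) this
      _ = Lf ^ 2 * ‖xN1 - xrN1‖ ^ 2 := by ring
  have h3 : ‖xN1 - xrN1‖ ^ 2 ≤ (1 / α₁) * ℓ xN1 urN1 (xrN1, urN1) := by
    have := hlow xN1 xrN1 urN1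
    rw [one_div, mul_comm, ← div_eq_mul_inv, le_div_iff₀ hα₁]
    linarith
  calc ℓ (f xN1 urN1) u' (f xrN1 urN1, u')
      ≤ α₂ * (Lf ^ 2 * ‖xN1 - xrN1‖ ^ 2) := by nlinarith [norm_nonneg (xN1 - xrN1)]
    _ ≤ α₂ * (Lf ^ 2 * ((1 / α₁) * ℓ xN1 urN1 (xrN1, urN1))) := by
        have : (0:ℝ) ≤ α₂ * Lf ^ 2 := by positivity
        nlinarith
    _ ≤ α₂ * (Lf ^ 2 * ((1 / α₁) * (γ * ((γ - 1) / γ) ^ N * ℓ x₀ u₀ (xr₀, ur₀)))) := by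
        have h := hturn
        have h1a : (0:ℝ) ≤ α₂ * Lf ^ 2 * (1 / α₁) := by positivity
        nlinarith
    _ = α₂ / α₁ * Lf ^ 2 * γ * ((γ - 1) / γ) ^ N * ℓ x₀ u₀ (xr₀, ur₀) := by
        field_simp
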